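/- arXiv:1908.09868 — 3 statements merged into one kernel-verified Lean document; each statement's English description precedes it below -/
import Mathlib

section
/- Given an institution I, the hybridised structure HI (with sentences built from I-sentences by Boolean connectives, modalities, and nominal operators, and Kripke models whose worlds are labelled by I-models) satisfies the satisfaction condition: for any signature morphism φ, Kripke model (M,W) over the target signature, world w, and source sentence ρ: (M,W) ⊨^w Sen^HI(φ)(ρ) iff the reduct of (M,W) satisfies ρ at w. Hence HI is an institution with global satisfaction (M,W) ⊨ ρ defined as satisfaction at all worlds. -/
/- Hybridisation HI of a base institution I (statement for a fixed signature
morphism φ that is the identity on nominals and modalities, translation on the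
base part): the satisfaction condition lifts to Kripke models, hence HI is an
institution with global satisfaction defined world-wise. -/

/-- Sentences of the hybridised institution over nominals `Nom`, modality
symbols `Λ` (indexed by arity), and base sentences `S`. -/
inductive HSen (Nom : Type*) (Λ : ℕ → Type*) (S : Type*) : Type _ where
  | base : S → HSen Nom Λ S
  | nom : Nom → HSen Nom Λ S
  | and : HSen Nom Λ S → HSen Nom Λ S → HSen Nom Λ S
  | or : HSen Nom Λ S → HSen Nom Λ S → HSen Nom Λ S
  | imp : HSen Nom Λ S → HSen Nom Λ S → HSen Nom Λ S
  | not : HSen Nom Λ S → HSen Nom Λ S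
  | box : (n : ℕ) → Λ (n + 1) → (Fin n → HSen Nom Λ S) → HSen Nom Λ S
  | dia : (n : ℕ) → Λ (n + 1) → (Fin n → HSen Nom Λ S) → HSen Nom Λ S
  | at_ : Nom → HSen Nom Λ S → HSen Nom Λ S

/-- A Kripke model: worlds `W`, accessibility relations for the modalities,
interpretation of the nominals, and a base-institution model at each world. -/
structure Kripke (W : Type*) (Nom : Type*) (Λ : ℕ → Type*) (M : Type*) where
  rel : ∀ {n : ℕ}, Λ n → (Fin n → W) → Prop
  nomI : Nom → W
  mod : W → M

/-- Local (pointed) satisfaction of hybrid sentences. -/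
def locSat {W Nom S M : Type*} {Λ : ℕ → Type*} (sat : M → S → Prop)
    (K : Kripke W Nom Λ M) : W → HSen Nom Λ S → Prop
  | w, .base ρ => sat (K.mod w) ρ
  | w, .nom i => K.nomI i = w
  | w, .and ρ σ => locSat sat K w ρ ∧ locSat sat K w σ
  | w, .or ρ σ => locSat sat K w ρ ∨ locSat sat K w σ
  | w, .imp ρ σ => locSat sat K w ρ → locSat sat K w σ
  | w, .not ρ => ¬ locSat sat K w ρ
  | w, .box n l args =>
      ∀ t : Fin (n + 1) → W, t 0 = w → K.rel l t →
        ∃ i : Fin n, locSat sat K (t i.succ) (args i)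
  | w, .dia n l args =>
      ∃ t : Fin (n + 1) → W, t 0 = w ∧ K.rel l t ∧
        ∀ i : Fin n, locSat sat K (t i.succ) (args i)
  | w, .at_ i ρ => locSat sat K (K.nomI i) ρ

/-- Translation of hybrid sentences along a signature morphism which is the
identity on nominals and modalities and acts by `tr` on base sentences. -/
def hTr {Nom S S' : Type*} {Λ : ℕ → Type*} (tr : S → S') :
    HSen Nom Λ S → HSen Nom Λ S'
  | .base ρ => .base (tr ρ)
  | .nom i => .nom i
  | .and ρ σ => .and (hTr tr ρ) (hTr tr σ)
  | .or ρ σ => .or (hTr tr ρ) (hTr tr σ)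
  | .imp ρ σ => .imp (hTr tr ρ) (hTr tr σ)
  | .not ρ => .not (hTr tr ρ)
  | .box n l args => .box n l (fun i => hTr tr (args i))
  | .dia n l args => .dia n l (fun i => hTr tr (args i))
  | .at_ i ρ => .at_ i (hTr tr ρ)

/-- Reduct of a Kripke model: world-wise reduct of the base models, frame and
nominal interpretation unchanged. -/
def kred {W Nom M M' : Type*} {Λ : ℕ → Type*} (r : M' → M)
    (K : Kripke W Nom Λ M') : Kripke W Nom Λ M :=
  { rel := K.rel, nomI := K.nomI, mod := fun w => r (K.mod w) }

theorem locSat_hTr_iff_locSat_kred {W Nom S S' M M' : Type*} {Λ : ℕ → Type*}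
    {sat : M → S → Prop} {sat' : M' → S' → Prop} {tr : S → S'} {r : M' → M}
    (satCond : ∀ (m' : M') (ρ : S), sat' m' (tr ρ) ↔ sat (r m') ρ)
    (K' : Kripke W Nom Λ M') (w : W) (ρ : HSen Nom Λ S) :
    locSat sat' K' w (hTr tr ρ) ↔ locSat sat (kred r K') w ρ := by
  induction ρ generalizing w with
  | base ρ => exact satCond _ ρ
  | nom i => exact Iff.rfl
  | and ρ σ ihρ ihσ => exact and_congr (ihρ w) (ihσ w)
  | or ρ σ ihρ ihσ => exact or_congr (ihρ w) (ihσ w)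
  | imp ρ σ ihρ ihσ => exact imp_congr (ihρ w) (ihσ w)
  | not ρ ih => exact not_congr (ih w)
  | box n l args ih =>
    exact forall_congr' fun t => imp_congr_right fun _ => imp_congr_right fun _ =>
      exists_congr fun i => ih i _
  | dia n l args ih =>
    exact exists_congr fun t => and_congr_right fun _ => and_congr_right fun _ =>
      forall_congr' fun i => ih i _
  | at_ i ρ ih => exact ih _

/-- the satisfaction condition for the hybridised institution HI:
locally, `(M,W) ⊨^w Sen^HI(φ)(ρ)` iff the reduct of `(M,W)` satisfies `ρ` at
`w`; hence also globally (satisfaction at all worlds). -/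
theorem hybridisation_satisfaction_condition
    {W Nom S S' M M' : Type*} {Λ : ℕ → Type*}
    (sat : M → S → Prop) (sat' : M' → S' → Prop)
    (tr : S → S') (r : M' → M)
    (satCond : ∀ (m' : M') (ρ : S), sat' m' (tr ρ) ↔ sat (r m') ρ) :
    (∀ (K' : Kripke W Nom Λ M') (w : W) (ρ : HSen Nom Λ S),
        locSat sat' K' w (hTr tr ρ) ↔ locSat sat (kred r K') w ρ) ∧
    (∀ (K' : Kripke W Nom Λ M') (ρ : HSen Nom Λ S),
        (∀ w, locSat sat' K' w (hTr tr ρ)) ↔ ∀ w, locSat sat (kred r K') w ρ) := by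
  exact ⟨locSat_hTr_iff_locSat_kred satCond,
    fun K' ρ => forall_congr' fun w => locSat_hTr_iff_locSat_kred satCond K' w ρ⟩
end

section
/- The borrowing-of-proofs soundness theorem for Hver: let (Φ, α, β) : I → I' be a conservative institution comorphism and (Σ, E) a theory in I. For any Σ-sentence e, if α_Σ(E) ⊨'_{Φ(Σ)} α_Σ(e) in I', then E ⊨_Σ e in I. -/
theorem forall_mem_image_sat_iff {ModS ModS1 SenS SenS1 : Type*}
    {sat : ModS → SenS → Prop} {sat' : ModS1 → SenS1 → Prop}
    {α : SenS → SenS1} {β : ModS1 → ModS}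
    (satCond : ∀ (M' : ModS1) (e : SenS), sat' M' (α e) ↔ sat (β M') e)
    (M' : ModS1) (E : Set SenS) :
    (∀ ρ' ∈ α '' E, sat' M' ρ') ↔ ∀ ρ ∈ E, sat (β M') ρ := by
  simp only [Set.forall_mem_image, satCond]

/-- borrowing-of-proofs soundness for Hver: if (Φ, α, β) is a
conservative institution comorphism (β_Σ surjective on models) and
α_Σ(E) ⊨' α_Σ(e) holds in the target institution, then E ⊨ e in the source. -/
theorem borrowing_of_proofs_soundness
    {ModS ModS1 SenS SenS1 : Type*}
    (sat : ModS → SenS → Prop) (sat' : ModS1 → SenS1 → Prop)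
    (α : SenS → SenS1) (β : ModS1 → ModS)
    (satCond : ∀ (M' : ModS1) (e : SenS), sat' M' (α e) ↔ sat (β M') e)
    (hcons : Function.Surjective β)
    (E : Set SenS) (e : SenS)
    (h : ∀ M' : ModS1, (∀ ρ' ∈ α '' E, sat' M' ρ') → sat' M' (α e)) :
    ∀ M : ModS, (∀ ρ ∈ E, sat M ρ) → sat M e := by
  intro M hM
  obtain ⟨M', rfl⟩ := hcons M
  exact (satCond M' e).mp (h M' ((forall_mem_image_sat_iff satCond M' E).mpr hM))
end

section
/- Model amalgamation lifts from the base institution to the hybridisation: if a commutative square of signature morphisms in the base institution I is a weak amalgamation square (every pair of compatible models has a common expansion), then the corresponding square of HI-signature morphisms (extending identically on nominals and modalities) is a weak amalgamation square for Kripke models: any two Kripke models over the two intermediate signatures whose reducts to the base corner agree (same world structure, nominal and modality interpretations, and world-wise compatible I-models) admit a common Kripke-model expansion. -/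
def IsWeakAmalgamation {M₀ M₁ M₂ M : Type*} (p₁ : M₁ → M₀) (p₂ : M₂ → M₀)
    (q₁ : M → M₁) (q₂ : M → M₂) : Prop :=
  ∀ m₁ m₂, p₁ m₁ = p₂ m₂ → ∃ n, q₁ n = m₁ ∧ q₂ n = m₂

namespace IsWeakAmalgamation

variable {M₀ M₁ M₂ M : Type*} {p₁ : M₁ → M₀} {p₂ : M₂ → M₀} {q₁ : M → M₁} {q₂ : M → M₂}

theorem pi (h : IsWeakAmalgamation p₁ p₂ q₁ q₂) (W : Type*) :
    IsWeakAmalgamation (fun f : W → M₁ => p₁ ∘ f) (fun f : W → M₂ => p₂ ∘ f)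
      (fun g : W → M => q₁ ∘ g) (fun g : W → M => q₂ ∘ g) := by
  intro f₁ f₂ hf
  choose g hg₁ hg₂ using fun w => h (f₁ w) (f₂ w) (congrFun hf w)
  exact ⟨g, funext hg₁, funext hg₂⟩

theorem kripke (h : IsWeakAmalgamation p₁ p₂ q₁ q₂) {W Nom : Type*} {Λ : ℕ → Type*} :
    IsWeakAmalgamation (kred (W := W) (Nom := Nom) (Λ := Λ) p₁) (kred p₂) (kred q₁)
      (kred q₂) := by
  rintro ⟨rel, nomI, m₁⟩ ⟨rel', nomI', m₂⟩ hred
  simp only [kred, Kripke.mk.injEq] at hred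
  obtain ⟨hrel, hnom, hmod⟩ := hred
  obtain ⟨g, rfl, rfl⟩ := h.pi W m₁ m₂ hmod
  refine ⟨⟨rel, nomI, g⟩, rfl, ?_⟩
  simp only [kred, Kripke.mk.injEq]
  exact ⟨hrel, hnom, rfl⟩

end IsWeakAmalgamation

theorem kripke_weak_amalgamation_general {W Nom : Type*} {Λ : ℕ → Type*}
    {Mod0 Mod1 Mod2 ModT : Type*}
    (p1 : Mod1 → Mod0) (p2 : Mod2 → Mod0)
    (q1 : ModT → Mod1) (q2 : ModT → Mod2)
    (hamalg : ∀ (m1 : Mod1) (m2 : Mod2), p1 m1 = p2 m2 →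
        ∃ n : ModT, q1 n = m1 ∧ q2 n = m2) :
    ∀ (K1 : Kripke W Nom Λ Mod1) (K2 : Kripke W Nom Λ Mod2),
      kred p1 K1 = kred p2 K2 →
        ∃ N : Kripke W Nom Λ ModT, kred q1 N = K1 ∧ kred q2 N = K2 :=
  IsWeakAmalgamation.kripke hamalg

/-- weak model amalgamation lifts from the base institution to
the hybridisation.  Given a commutative square of model reducts
p1 ∘ q1 = p2 ∘ q2 with the weak amalgamation property at the base level, any
two Kripke models over the intermediate signatures whose reducts to the base
corner agree (same frame, nominal interpretations, and world-wise compatible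
base models) admit a common Kripke-model expansion. -/
theorem kripke_weak_amalgamation {W Nom : Type*} {Λ : ℕ → Type*}
    {Mod0 Mod1 Mod2 ModT : Type*}
    (p1 : Mod1 → Mod0) (p2 : Mod2 → Mod0)
    (q1 : ModT → Mod1) (q2 : ModT → Mod2)
    (hcomm : ∀ n : ModT, p1 (q1 n) = p2 (q2 n))
    (hamalg : ∀ (m1 : Mod1) (m2 : Mod2), p1 m1 = p2 m2 →
        ∃ n : ModT, q1 n = m1 ∧ q2 n = m2) :
    ∀ (K1 : Kripke W Nom Λ Mod1) (K2 : Kripke W Nom Λ Mod2),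
      kred p1 K1 = kred p2 K2 →
        ∃ N : Kripke W Nom Λ ModT, kred q1 N = K1 ∧ kred q2 N = K2 :=
  kripke_weak_amalgamation_general p1 p2 q1 q2 hamalg
end
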